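/- arXiv:1402.4110 — 2 statements merged into one kernel-verified Lean document; each statement's English description precedes it below -/
import Mathlib

section
/- Fix a nonnegative integer k. Define polynomials q_l in the polynomial ring ℂ[x,y] recursively by q_0 = 1, q_1 = x, and q_l = x·q_{l-1} − (l−1)(k−l+1)·y²·q_{l-2} for l ≥ 2. Then q_k = ∏_{j=0}^{k−1} (x + (k−1−2j)·y), where the empty product (for k = 0) is 1. -/
open MvPolynomial

noncomputable def masakiQ (k : ℕ) : ℕ → MvPolynomial (Fin 2) ℂ
  | 0 => 1
  | 1 => X 0
  | (l + 2) => X 0 * masakiQ k (l + 1)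
      - (((l : ℤ) + 1) * ((k : ℤ) - (l : ℤ) - 1)) • (X 1 ^ 2 * masakiQ k l)

lemma masakiQ_rec (k l : ℕ) : masakiQ k (l + 2) = X 0 * masakiQ k (l + 1)
    - (((l : ℤ) + 1) * ((k : ℤ) - (l : ℤ) - 1)) • (X 1 ^ 2 * masakiQ k l) := rfl

lemma masakiQ_zero (k : ℕ) : masakiQ k 0 = 1 := rfl
lemma masakiQ_one (k : ℕ) : masakiQ k 1 = X 0 := rfl

lemma masakiQ_two (k : ℕ) : masakiQ k 2 = X 0 * X 0 - ((k:ℤ) - 1) • (X 1 ^ 2) := by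
  have h : masakiQ k 2 = masakiQ k (0 + 2) := rfl
  rw [h, masakiQ_rec]
  simp only [show (0:ℕ)+1 = 1 from rfl, masakiQ_one, masakiQ_zero, mul_one, zsmul_eq_mul]
  push_cast
  ring

lemma masakiQ_three (k : ℕ) : masakiQ k 3 = X 0 * (X 0 * X 0)
    - (3*(k:ℤ) - 5) • (X 1 ^ 2 * X 0) := by
  have h : masakiQ k 3 = masakiQ k (1 + 2) := rfl
  rw [h, masakiQ_rec]
  simp only [show (1:ℕ)+1 = 2 from rfl, masakiQ_two, masakiQ_one, zsmul_eq_mul]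
  push_cast
  ring

lemma masakiQ_succ_self (k : ℕ) : masakiQ k (k + 1) = X 0 * masakiQ k k := by
  cases k with
  | zero => simp [masakiQ]
  | succ m =>
      show masakiQ (m+1) (m + 2) = X 0 * masakiQ (m+1) (m+1)
      rw [masakiQ_rec]
      have h : ((m:ℤ) + 1) * (((m+1 : ℕ):ℤ) - (m:ℤ) - 1) = 0 := by push_cast; ring
      rw [h, zero_smul, sub_zero]

lemma masaki_lemA (k : ℕ) : ∀ t : ℕ, masakiQ (k+2) (t+2)
    = masakiQ k (t+2) - (((t:ℤ) + 2) * ((t:ℤ) + 1)) • (X 1 ^ 2 * masakiQ k t)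
  | 0 => by
      simp only [show (0:ℕ)+2 = 2 from rfl, masakiQ_two, masakiQ_zero, mul_one, zsmul_eq_mul]
      push_cast
      ring
  | 1 => by
      simp only [show (1:ℕ)+2 = 3 from rfl, masakiQ_three, masakiQ_one, zsmul_eq_mul]
      push_cast
      ring
  | (t + 2) => by
      have ih1 := masaki_lemA k (t+1)
      have ih2 := masaki_lemA k t
      rw [masakiQ_rec (k+2) (t+2)]
      simp only [show t+2+1 = t+1+2 from rfl]
      rw [ih1, ih2, masakiQ_rec k (t+2)]
      simp only [show t+2+1 = t+1+2 from rfl]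
      rw [masakiQ_rec k t]
      simp only [zsmul_eq_mul]
      push_cast
      ring

lemma masaki_main : ∀ k : ℕ, masakiQ k k
    = ∏ j ∈ Finset.range k, (X 0 + ((k : ℤ) - 1 - 2 * (j : ℤ)) • X 1)
  | 0 => by simp [masakiQ]
  | 1 => by norm_num [masakiQ, Finset.prod_range_one]
  | (n + 2) => by
      have ih := masaki_main n
      have hA := masaki_lemA n n
      rw [hA, masakiQ_rec n n, masakiQ_succ_self n]
      rw [show n+2 = n+1+1 from rfl]
      rw [Finset.prod_range_succ', Finset.prod_range_succ]
      have hsc : ∀ i : ℕ, (((n+1+1 : ℕ):ℤ) - 1 - 2*((i+1 : ℕ):ℤ)) = ((n:ℤ) - 1 - 2*(i:ℤ)) := by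
        intro i; push_cast; ring
      simp only [hsc]
      rw [← ih]
      simp only [zsmul_eq_mul]
      push_cast
      ring

lemma masaki_q_eq (k : ℕ) (q : ℕ → MvPolynomial (Fin 2) ℂ)
    (h0 : q 0 = 1) (h1 : q 1 = X 0)
    (hrec : ∀ l, 2 ≤ l →
      q l = X 0 * q (l - 1)
        - (((l : ℤ) - 1) * ((k : ℤ) - (l : ℤ) + 1)) • ((X 1) ^ 2 * q (l - 2))) :
    ∀ l, q l = masakiQ k l
  | 0 => h0
  | 1 => h1
  | (l + 2) => by
      rw [hrec (l+2) (by omega)]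
      rw [show l+2-1 = l+1 from by omega, show l+2-2 = l from by omega]
      rw [masaki_q_eq k q h0 h1 hrec (l+1), masaki_q_eq k q h0 h1 hrec l, masakiQ_rec]
      simp only [zsmul_eq_mul]
      push_cast
      ring

/-- Masaki's lemma in the polynomial ring `ℂ[x,y]`: if `q 0 = 1`, `q 1 = x` and
`q l = x * q (l-1) - (l-1)(k-l+1) y^2 * q (l-2)` for `l ≥ 2`, then
`q k = ∏_{j=0}^{k-1} (x + (k-1-2j) y)`. -/
theorem masaki_lemma_polynomial (k : ℕ) (q : ℕ → MvPolynomial (Fin 2) ℂ)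
    (h0 : q 0 = 1) (h1 : q 1 = X 0)
    (hrec : ∀ l, 2 ≤ l →
      q l = X 0 * q (l - 1)
        - (((l : ℤ) - 1) * ((k : ℤ) - (l : ℤ) + 1)) • ((X 1) ^ 2 * q (l - 2))) :
    q k = ∏ j ∈ Finset.range k, (X 0 + ((k : ℤ) - 1 - 2 * (j : ℤ)) • X 1) := by
  rw [masaki_q_eq k q h0 h1 hrec k, masaki_main]
end

section
/- Let n ≥ 1 and consider smooth functions f : ℂⁿ × ℝ × (0,∞) → ℂ (at least twice continuously differentiable). With the operators Z_α, Z̄_α, T on ℂⁿ × ℝ extended to act in the (z, t) variables, define the Θ-frame operators 𝐙_∞ f = ρ·∂f/∂ρ, 𝐙_0 f = ρ²·T f, 𝐙_α f = ρ·Z_α f, 𝐙_ᾱ f = ρ·Z̄_α f, and 𝐙_τ = ½𝐙_∞ + i𝐙_0, 𝐙_τ̄ = ½𝐙_∞ − i𝐙_0. Then the following commutator identities hold exactly on all such f: [𝐙_τ, 𝐙_τ] = 0; [𝐙_τ, 𝐙_α] = ½𝐙_α; [𝐙_τ, 𝐙_ᾱ] = ½𝐙_ᾱ; [𝐙_τ,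 𝐙_τ̄] = −(𝐙_τ − 𝐙_τ̄); [𝐙_α, 𝐙_β] = 0; and [𝐙_α, 𝐙_β̄] = −½·δ_{αβ}·(𝐙_τ − 𝐙_τ̄), where [X, Y]f = X(Yf) − Y(Xf). -/
/-- `Z_α` acting in the `(z,t)` variables on functions on `ℂⁿ × ℝ × ℝ`:
`Z_α f = ½(∂f/∂x^α − i ∂f/∂y^α) + i z̄^α ∂f/∂t`. -/
noncomputable def prodZ (n : ℕ) (α : Fin n) (f : (Fin n → ℂ) × ℝ × ℝ → ℂ) :
    (Fin n → ℂ) × ℝ × ℝ → ℂ :=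
  fun p =>
    (1 / 2 : ℂ) * (fderiv ℝ f p (Pi.single α (1 : ℂ), (0 : ℝ), (0 : ℝ))
        - Complex.I * fderiv ℝ f p (Pi.single α Complex.I, (0 : ℝ), (0 : ℝ)))
      + Complex.I * (starRingEnd ℂ) (p.1 α) * fderiv ℝ f p (0, (1 : ℝ), (0 : ℝ))

/-- `Z̄_α` acting in the `(z,t)` variables:
`Z̄_α f = ½(∂f/∂x^α + i ∂f/∂y^α) − i z^α ∂f/∂t`. -/
noncomputable def prodZbar (n : ℕ) (α : Fin n) (f : (Fin n → ℂ) × ℝ × ℝ → ℂ) :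
    (Fin n → ℂ) × ℝ × ℝ → ℂ :=
  fun p =>
    (1 / 2 : ℂ) * (fderiv ℝ f p (Pi.single α (1 : ℂ), (0 : ℝ), (0 : ℝ))
        + Complex.I * fderiv ℝ f p (Pi.single α Complex.I, (0 : ℝ), (0 : ℝ)))
      - Complex.I * (p.1 α) * fderiv ℝ f p (0, (1 : ℝ), (0 : ℝ))

/-- The Reeb field `T f = 2 ∂f/∂t` acting in the `(z,t)` variables. -/
noncomputable def prodT (n : ℕ) (f : (Fin n → ℂ) × ℝ × ℝ → ℂ) :
    (Fin n → ℂ) × ℝ × ℝ → ℂ :=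
  fun p => 2 * fderiv ℝ f p (0, (1 : ℝ), (0 : ℝ))

/-- The Θ-frame operator `𝐙_∞ f = ρ ∂f/∂ρ`. -/
noncomputable def thetaZinf (n : ℕ) (f : (Fin n → ℂ) × ℝ × ℝ → ℂ) :
    (Fin n → ℂ) × ℝ × ℝ → ℂ :=
  fun p => (p.2.2 : ℂ) * fderiv ℝ f p (0, (0 : ℝ), (1 : ℝ))

/-- The Θ-frame operator `𝐙_0 f = ρ² T f`. -/
noncomputable def thetaZ0 (n : ℕ) (f : (Fin n → ℂ) × ℝ × ℝ → ℂ) :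
    (Fin n → ℂ) × ℝ × ℝ → ℂ :=
  fun p => (p.2.2 : ℂ) ^ 2 * prodT n f p

/-- The Θ-frame operator `𝐙_α f = ρ Z_α f`. -/
noncomputable def thetaZ (n : ℕ) (α : Fin n) (f : (Fin n → ℂ) × ℝ × ℝ → ℂ) :
    (Fin n → ℂ) × ℝ × ℝ → ℂ :=
  fun p => (p.2.2 : ℂ) * prodZ n α f p

/-- The Θ-frame operator `𝐙_ᾱ f = ρ Z̄_α f`. -/
noncomputable def thetaZbar (n : ℕ) (α : Fin n) (f : (Fin n → ℂ) × ℝ × ℝ → ℂ) :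
    (Fin n → ℂ) × ℝ × ℝ → ℂ :=
  fun p => (p.2.2 : ℂ) * prodZbar n α f p

/-- `𝐙_τ = ½ 𝐙_∞ + i 𝐙_0`. -/
noncomputable def thetaZtau (n : ℕ) (f : (Fin n → ℂ) × ℝ × ℝ → ℂ) :
    (Fin n → ℂ) × ℝ × ℝ → ℂ :=
  fun p => (1 / 2 : ℂ) * thetaZinf n f p + Complex.I * thetaZ0 n f p

/-- `𝐙_τ̄ = ½ 𝐙_∞ − i 𝐙_0`. -/
noncomputable def thetaZtaubar (n : ℕ) (f : (Fin n → ℂ) × ℝ × ℝ → ℂ) :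
    (Fin n → ℂ) × ℝ × ℝ → ℂ :=
  fun p => (1 / 2 : ℂ) * thetaZinf n f p - Complex.I * thetaZ0 n f p

/-! ### Auxiliary framework: first-order operators with smooth coefficients -/

open scoped BigOperators

noncomputable section ThetaAux

abbrev ThetaPt (n : ℕ) := (Fin n → ℂ) × ℝ × ℝ

variable {n : ℕ}

def thetaU (n : ℕ) : Set (ThetaPt n) := {p | 0 < p.2.2}

lemma thetaU_isOpen : IsOpen (thetaU n) :=
  (isOpen_Ioi.preimage (continuous_snd.snd))

/-- First-order operator with coefficients `c` and directions `v`. -/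
def thetaApp {m : ℕ} (c : Fin m → ThetaPt n → ℂ) (v : Fin m → ThetaPt n)
    (f : ThetaPt n → ℂ) : ThetaPt n → ℂ :=
  fun p => ∑ j, c j p * fderiv ℝ f p (v j)

section deriv

variable {f : ThetaPt n → ℂ} {p : ThetaPt n}

lemma theta_fderiv_contDiffOn (hf : ContDiffOn ℝ 2 f (thetaU n)) :
    ContDiffOn ℝ 1 (fderiv ℝ f) (thetaU n) := by
  have h2 : ContDiffOn ℝ (1 + 1 : ℕ) f (thetaU n) := by exact_mod_cast hf
  exact (((contDiffOn_succ_iff_fderiv_of_isOpen (n := (1:WithTop ℕ∞)) thetaU_isOpen).1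
    (by exact_mod_cast h2))).2.2

lemma theta_dfw_diff (hf : ContDiffOn ℝ 2 f (thetaU n)) (hp : p ∈ thetaU n)
    (w : ThetaPt n) : DifferentiableAt ℝ (fun q => fderiv ℝ f q w) p := by
  have h1 : DifferentiableAt ℝ (fderiv ℝ f) p :=
    ((theta_fderiv_contDiffOn hf).differentiableOn one_ne_zero).differentiableAt
      (thetaU_isOpen.mem_nhds hp)
  exact h1.clm_apply (differentiableAt_const w)

lemma theta_dfw_fderiv (hf : ContDiffOn ℝ 2 f (thetaU n)) (hp : p ∈ thetaU n)
    (w u : ThetaPt n) :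
    fderiv ℝ (fun q => fderiv ℝ f q w) p u = fderiv ℝ (fderiv ℝ f) p u w := by
  have h1 : DifferentiableAt ℝ (fderiv ℝ f) p :=
    ((theta_fderiv_contDiffOn hf).differentiableOn one_ne_zero).differentiableAt
      (thetaU_isOpen.mem_nhds hp)
  rw [fderiv_clm_apply h1 (differentiableAt_const w)]
  simp

lemma theta_symm (hf : ContDiffOn ℝ 2 f (thetaU n)) (hp : p ∈ thetaU n)
    (u w : ThetaPt n) :
    fderiv ℝ (fderiv ℝ f) p u w = fderiv ℝ (fderiv ℝ f) p w u :=
  ((hf.contDiffAt (thetaU_isOpen.mem_nhds hp)).isSymmSndFDerivAt (by simp)) u w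

lemma thetaApp_fderiv {m : ℕ} (c : Fin m → ThetaPt n → ℂ) (v : Fin m → ThetaPt n)
    (hc : ∀ j, Differentiable ℝ (c j)) (hf : ContDiffOn ℝ 2 f (thetaU n))
    (hp : p ∈ thetaU n) (u : ThetaPt n) :
    fderiv ℝ (thetaApp c v f) p u
      = ∑ j, (fderiv ℝ (c j) p u * fderiv ℝ f p (v j)
          + c j p * fderiv ℝ (fderiv ℝ f) p u (v j)) := by
  unfold thetaApp
  rw [fderiv_fun_sum (A := fun j q => c j q * fderiv ℝ f q (v j)) (fun j _ => ((hc j) p).mul (theta_dfw_diff hf hp (v j)))]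
  rw [ContinuousLinearMap.sum_apply]
  refine Finset.sum_congr rfl fun j _ => ?_
  rw [fderiv_fun_mul ((hc j) p) (theta_dfw_diff hf hp (v j))]
  simp only [ContinuousLinearMap.add_apply, ContinuousLinearMap.smul_apply, smul_eq_mul,
    theta_dfw_fderiv hf hp (v j) u]
  ring

/-- The key general commutator formula: second-order terms cancel by symmetry. -/
lemma thetaApp_bracket {m m' : ℕ} (c : Fin m → ThetaPt n → ℂ) (v : Fin m → ThetaPt n)
    (d : Fin m' → ThetaPt n → ℂ) (w : Fin m' → ThetaPt n)
    (hc : ∀ j, Differentiable ℝ (c j)) (hd : ∀ k, Differentiable ℝ (d k))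
    (hf : ContDiffOn ℝ 2 f (thetaU n)) (hp : p ∈ thetaU n) :
    thetaApp c v (thetaApp d w f) p - thetaApp d w (thetaApp c v f) p
      = ∑ k, thetaApp c v (d k) p * fderiv ℝ f p (w k)
        - ∑ j, thetaApp d w (c j) p * fderiv ℝ f p (v j) := by
  have expand1 : thetaApp c v (thetaApp d w f) p
      = (∑ j, ∑ k, c j p * (fderiv ℝ (d k) p (v j) * fderiv ℝ f p (w k)))
        + ∑ j, ∑ k, c j p * (d k p * fderiv ℝ (fderiv ℝ f) p (v j) (w k)) := by
    rw [show thetaApp c v (thetaApp d w f) p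
        = ∑ j, c j p * fderiv ℝ (thetaApp d w f) p (v j) from rfl]
    rw [← Finset.sum_add_distrib]
    refine Finset.sum_congr rfl fun j _ => ?_
    rw [thetaApp_fderiv d w hd hf hp (v j), Finset.mul_sum, ← Finset.sum_add_distrib]
    refine Finset.sum_congr rfl fun k _ => ?_
    ring
  have expand2 : thetaApp d w (thetaApp c v f) p
      = (∑ k, ∑ j, d k p * (fderiv ℝ (c j) p (w k) * fderiv ℝ f p (v j)))
        + ∑ k, ∑ j, d k p * (c j p * fderiv ℝ (fderiv ℝ f) p (w k) (v j)) := by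
    rw [show thetaApp d w (thetaApp c v f) p
        = ∑ k, d k p * fderiv ℝ (thetaApp c v f) p (w k) from rfl]
    rw [← Finset.sum_add_distrib]
    refine Finset.sum_congr rfl fun k _ => ?_
    rw [thetaApp_fderiv c v hc hf hp (w k), Finset.mul_sum, ← Finset.sum_add_distrib]
    refine Finset.sum_congr rfl fun j _ => ?_
    ring
  rw [expand1, expand2]
  have hcancel : (∑ j, ∑ k, c j p * (d k p * fderiv ℝ (fderiv ℝ f) p (v j) (w k)))
      = ∑ k, ∑ j, d k p * (c j p * fderiv ℝ (fderiv ℝ f) p (w k) (v j)) := by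
    rw [Finset.sum_comm]
    refine Finset.sum_congr rfl fun k _ => Finset.sum_congr rfl fun j _ => ?_
    rw [theta_symm hf hp (v j) (w k)]
    ring
  rw [hcancel]
  have h1 : (∑ j, ∑ k, c j p * (fderiv ℝ (d k) p (v j) * fderiv ℝ f p (w k)))
      = ∑ k, thetaApp c v (d k) p * fderiv ℝ f p (w k) := by
    rw [Finset.sum_comm]
    refine Finset.sum_congr rfl fun k _ => ?_
    rw [show thetaApp c v (d k) p = ∑ j, c j p * fderiv ℝ (d k) p (v j) from rfl,
      Finset.sum_mul]
    exact Finset.sum_congr rfl fun j _ => by ring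
  have h2 : (∑ k, ∑ j, d k p * (fderiv ℝ (c j) p (w k) * fderiv ℝ f p (v j)))
      = ∑ j, thetaApp d w (c j) p * fderiv ℝ f p (v j) := by
    rw [Finset.sum_comm]
    refine Finset.sum_congr rfl fun j _ => ?_
    rw [show thetaApp d w (c j) p = ∑ k, d k p * fderiv ℝ (c j) p (w k) from rfl,
      Finset.sum_mul]
    exact Finset.sum_congr rfl fun k _ => by ring
  rw [h1, h2]
  ring

end deriv

/-! ### Basic linear maps and coefficient derivatives -/

def rhoL (n : ℕ) : ThetaPt n →L[ℝ] ℂ :=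
  Complex.ofRealCLM.comp ((ContinuousLinearMap.snd ℝ ℝ ℝ).comp
    (ContinuousLinearMap.snd ℝ (Fin n → ℂ) (ℝ × ℝ)))

@[simp] lemma rhoL_apply (u : ThetaPt n) : rhoL n u = (u.2.2 : ℂ) := rfl

def zeeL (n : ℕ) (α : Fin n) : ThetaPt n →L[ℝ] ℂ :=
  (ContinuousLinearMap.proj α).comp (ContinuousLinearMap.fst ℝ (Fin n → ℂ) (ℝ × ℝ))

@[simp] lemma zeeL_apply (α : Fin n) (u : ThetaPt n) : zeeL n α u = u.1 α := rfl

def zbarL (n : ℕ) (α : Fin n) : ThetaPt n →L[ℝ] ℂ :=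
  (Complex.conjCLE.toContinuousLinearMap).comp (zeeL n α)

@[simp] lemma zbarL_apply (α : Fin n) (u : ThetaPt n) :
    zbarL n α u = (starRingEnd ℂ) (u.1 α) := rfl

lemma rho_hasFDerivAt (p : ThetaPt n) :
    HasFDerivAt (fun q : ThetaPt n => (q.2.2 : ℂ)) (rhoL n) p := (rhoL n).hasFDerivAt

lemma zee_hasFDerivAt (α : Fin n) (p : ThetaPt n) :
    HasFDerivAt (fun q : ThetaPt n => q.1 α) (zeeL n α) p := (zeeL n α).hasFDerivAt

lemma zbar_hasFDerivAt (α : Fin n) (p : ThetaPt n) :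
    HasFDerivAt (fun q : ThetaPt n => (starRingEnd ℂ) (q.1 α)) (zbarL n α) p :=
  (zbarL n α).hasFDerivAt

lemma coefRho_hasFDerivAt (a : ℂ) (p : ThetaPt n) :
    HasFDerivAt (fun q : ThetaPt n => a * (q.2.2 : ℂ)) (a • rhoL n) p :=
  (rho_hasFDerivAt p).const_mul a

lemma coefRho_diff (a : ℂ) : Differentiable ℝ (fun q : ThetaPt n => a * (q.2.2 : ℂ)) :=
  fun p => (coefRho_hasFDerivAt a p).differentiableAt

@[simp] lemma fderiv_coefRho (a : ℂ) (p u : ThetaPt n) :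
    fderiv ℝ (fun q : ThetaPt n => a * (q.2.2 : ℂ)) p u = a * u.2.2 := by
  rw [(coefRho_hasFDerivAt a p).fderiv]; simp

lemma coefRho2_hasFDerivAt (a : ℂ) (p : ThetaPt n) :
    HasFDerivAt (fun q : ThetaPt n => a * (q.2.2 : ℂ) ^ 2)
      (a • (((p.2.2 : ℂ)) • rhoL n + ((p.2.2 : ℂ)) • rhoL n)) p := by
  have h := ((rho_hasFDerivAt (n := n) p).mul (rho_hasFDerivAt p)).const_mul a
  simpa [pow_two] using h

lemma coefRho2_diff (a : ℂ) : Differentiable ℝ (fun q : ThetaPt n => a * (q.2.2 : ℂ) ^ 2) :=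
  fun p => (coefRho2_hasFDerivAt a p).differentiableAt

@[simp] lemma fderiv_coefRho2 (a : ℂ) (p u : ThetaPt n) :
    fderiv ℝ (fun q : ThetaPt n => a * (q.2.2 : ℂ) ^ 2) p u
      = 2 * a * p.2.2 * u.2.2 := by
  rw [(coefRho2_hasFDerivAt a p).fderiv]; simp; ring

lemma coefRhoZ_hasFDerivAt (a : ℂ) (α : Fin n) (p : ThetaPt n) :
    HasFDerivAt (fun q : ThetaPt n => a * (q.2.2 : ℂ) * q.1 α)
      ((a * (p.2.2 : ℂ)) • zeeL n α + (p.1 α) • (a • rhoL n)) p :=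
  (coefRho_hasFDerivAt a p).mul (zee_hasFDerivAt α p)

lemma coefRhoZ_diff (a : ℂ) (α : Fin n) :
    Differentiable ℝ (fun q : ThetaPt n => a * (q.2.2 : ℂ) * q.1 α) :=
  fun p => (coefRhoZ_hasFDerivAt a α p).differentiableAt

@[simp] lemma fderiv_coefRhoZ (a : ℂ) (α : Fin n) (p u : ThetaPt n) :
    fderiv ℝ (fun q : ThetaPt n => a * (q.2.2 : ℂ) * q.1 α) p u
      = a * p.2.2 * u.1 α + a * u.2.2 * p.1 α := by
  rw [(coefRhoZ_hasFDerivAt a α p).fderiv]; simp; ring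

lemma coefRhoZbar_hasFDerivAt (a : ℂ) (α : Fin n) (p : ThetaPt n) :
    HasFDerivAt (fun q : ThetaPt n => a * (q.2.2 : ℂ) * (starRingEnd ℂ) (q.1 α))
      ((a * (p.2.2 : ℂ)) • zbarL n α + ((starRingEnd ℂ) (p.1 α)) • (a • rhoL n)) p :=
  (coefRho_hasFDerivAt a p).mul (zbar_hasFDerivAt α p)

lemma coefRhoZbar_diff (a : ℂ) (α : Fin n) :
    Differentiable ℝ (fun q : ThetaPt n => a * (q.2.2 : ℂ) * (starRingEnd ℂ) (q.1 α)) :=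
  fun p => (coefRhoZbar_hasFDerivAt a α p).differentiableAt

@[simp] lemma fderiv_coefRhoZbar (a : ℂ) (α : Fin n) (p u : ThetaPt n) :
    fderiv ℝ (fun q : ThetaPt n => a * (q.2.2 : ℂ) * (starRingEnd ℂ) (q.1 α)) p u
      = a * p.2.2 * (starRingEnd ℂ) (u.1 α)
        + a * u.2.2 * (starRingEnd ℂ) (p.1 α) := by
  rw [(coefRhoZbar_hasFDerivAt a α p).fderiv]; simp; ring

/-! ### Coefficient families of the Θ-frame operators -/

def cTau (n : ℕ) : Fin 2 → ThetaPt n → ℂ :=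
  ![fun p => (1 / 2 : ℂ) * (p.2.2 : ℂ), fun p => (2 * Complex.I) * (p.2.2 : ℂ) ^ 2]

def vTau (n : ℕ) : Fin 2 → ThetaPt n :=
  ![(0, (0 : ℝ), (1 : ℝ)), (0, (1 : ℝ), (0 : ℝ))]

def cTaubar (n : ℕ) : Fin 2 → ThetaPt n → ℂ :=
  ![fun p => (1 / 2 : ℂ) * (p.2.2 : ℂ), fun p => (-(2 * Complex.I)) * (p.2.2 : ℂ) ^ 2]

def cZee (n : ℕ) (α : Fin n) : Fin 3 → ThetaPt n → ℂ :=
  ![fun p => (1 / 2 : ℂ) * (p.2.2 : ℂ), fun p => (-(Complex.I / 2)) * (p.2.2 : ℂ),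
    fun p => Complex.I * (p.2.2 : ℂ) * (starRingEnd ℂ) (p.1 α)]

def vZee (n : ℕ) (α : Fin n) : Fin 3 → ThetaPt n :=
  ![(Pi.single α (1 : ℂ), (0 : ℝ), (0 : ℝ)), (Pi.single α Complex.I, (0 : ℝ), (0 : ℝ)),
    (0, (1 : ℝ), (0 : ℝ))]

def cZeebar (n : ℕ) (α : Fin n) : Fin 3 → ThetaPt n → ℂ :=
  ![fun p => (1 / 2 : ℂ) * (p.2.2 : ℂ), fun p => (Complex.I / 2) * (p.2.2 : ℂ),
    fun p => (-Complex.I) * (p.2.2 : ℂ) * (p.1 α)]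

lemma cTau_diff (j : Fin 2) : Differentiable ℝ (cTau n j) := by
  fin_cases j
  · exact coefRho_diff _
  · exact coefRho2_diff _

lemma cTaubar_diff (j : Fin 2) : Differentiable ℝ (cTaubar n j) := by
  fin_cases j
  · exact coefRho_diff _
  · exact coefRho2_diff _

lemma cZee_diff (α : Fin n) (j : Fin 3) : Differentiable ℝ (cZee n α j) := by
  fin_cases j
  · exact coefRho_diff _
  · exact coefRho_diff _
  · exact coefRhoZbar_diff _ _

lemma cZeebar_diff (α : Fin n) (j : Fin 3) : Differentiable ℝ (cZeebar n α j) := by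
  fin_cases j
  · exact coefRho_diff _
  · exact coefRho_diff _
  · exact coefRhoZ_diff _ _

/-! ### Representation of the Θ-frame operators via `thetaApp` -/

lemma thetaZtau_rep (f : ThetaPt n → ℂ) :
    thetaZtau n f = thetaApp (cTau n) (vTau n) f := by
  funext p
  simp only [thetaZtau, thetaZinf, thetaZ0, prodT, thetaApp, cTau, vTau, Fin.sum_univ_two,
    Matrix.cons_val_zero, Matrix.cons_val_one, Matrix.head_cons]
  ring

lemma thetaZtaubar_rep (f : ThetaPt n → ℂ) :
    thetaZtaubar n f = thetaApp (cTaubar n) (vTau n) f := by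
  funext p
  simp only [thetaZtaubar, thetaZinf, thetaZ0, prodT, thetaApp, cTaubar, vTau,
    Fin.sum_univ_two, Matrix.cons_val_zero, Matrix.cons_val_one, Matrix.head_cons]
  ring

lemma thetaZ_rep (α : Fin n) (f : ThetaPt n → ℂ) :
    thetaZ n α f = thetaApp (cZee n α) (vZee n α) f := by
  funext p
  simp only [thetaZ, prodZ, thetaApp, cZee, vZee, Fin.sum_univ_three,
    Matrix.cons_val_zero, Matrix.cons_val_one, Matrix.head_cons, Matrix.cons_val_two,
    Matrix.tail_cons]
  ring

lemma thetaZbar_rep (α : Fin n) (f : ThetaPt n → ℂ) :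
    thetaZbar n α f = thetaApp (cZeebar n α) (vZee n α) f := by
  funext p
  simp only [thetaZbar, prodZbar, thetaApp, cZeebar, vZee, Fin.sum_univ_three,
    Matrix.cons_val_zero, Matrix.cons_val_one, Matrix.head_cons, Matrix.cons_val_two,
    Matrix.tail_cons]
  ring

end ThetaAux

/-- Exact bracket relations of the preferred Θ-frame
`{𝐙_τ, 𝐙_α, 𝐙_τ̄, 𝐙_ᾱ}` on the product Θ-manifold `ℂⁿ × ℝ × (0,∞)`:
`[𝐙_τ,𝐙_τ] = 0`, `[𝐙_τ,𝐙_α] = ½𝐙_α`, `[𝐙_τ,𝐙_ᾱ] = ½𝐙_ᾱ`,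
`[𝐙_τ,𝐙_τ̄] = −(𝐙_τ − 𝐙_τ̄)`, `[𝐙_α,𝐙_β] = 0`, and
`[𝐙_α,𝐙_β̄] = −½ δ_{αβ} (𝐙_τ − 𝐙_τ̄)`. -/
theorem theta_frame_commutators (n : ℕ) (hn : 1 ≤ n)
    (f : (Fin n → ℂ) × ℝ × ℝ → ℂ)
    (hf : ContDiffOn ℝ 2 f {p : (Fin n → ℂ) × ℝ × ℝ | 0 < p.2.2}) :
    (∀ p : (Fin n → ℂ) × ℝ × ℝ, 0 < p.2.2 →
      thetaZtau n (thetaZtau n f) p - thetaZtau n (thetaZtau n f) p = 0) ∧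
    (∀ α : Fin n, ∀ p : (Fin n → ℂ) × ℝ × ℝ, 0 < p.2.2 →
      thetaZtau n (thetaZ n α f) p - thetaZ n α (thetaZtau n f) p
        = (1 / 2 : ℂ) * thetaZ n α f p) ∧
    (∀ α : Fin n, ∀ p : (Fin n → ℂ) × ℝ × ℝ, 0 < p.2.2 →
      thetaZtau n (thetaZbar n α f) p - thetaZbar n α (thetaZtau n f) p
        = (1 / 2 : ℂ) * thetaZbar n α f p) ∧
    (∀ p : (Fin n → ℂ) × ℝ × ℝ, 0 < p.2.2 →
      thetaZtau n (thetaZtaubar n f) p - thetaZtaubar n (thetaZtau n f) p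
        = -(thetaZtau n f p - thetaZtaubar n f p)) ∧
    (∀ α β : Fin n, ∀ p : (Fin n → ℂ) × ℝ × ℝ, 0 < p.2.2 →
      thetaZ n α (thetaZ n β f) p - thetaZ n β (thetaZ n α f) p = 0) ∧
    (∀ α β : Fin n, ∀ p : (Fin n → ℂ) × ℝ × ℝ, 0 < p.2.2 →
      thetaZ n α (thetaZbar n β f) p - thetaZbar n β (thetaZ n α f) p
        = -(1 / 2 : ℂ) * (if α = β then 1 else 0)
            * (thetaZtau n f p - thetaZtaubar n f p)) := by
  have hfU : ContDiffOn ℝ 2 f (thetaU n) := hf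
  refine ⟨fun p hp => sub_self _, ?_, ?_, ?_, ?_, ?_⟩
  · -- [𝐙_τ, 𝐙_α] = ½ 𝐙_α
    intro α p hp
    have hp' : p ∈ thetaU n := hp
    simp only [thetaZtau_rep, thetaZ_rep]
    rw [thetaApp_bracket (cTau n) (vTau n) (cZee n α) (vZee n α)
      cTau_diff (cZee_diff α) hfU hp']
    simp [thetaApp, cTau, vTau, cZee, vZee, Fin.sum_univ_two, Fin.sum_univ_three]
    ring
  · -- [𝐙_τ, 𝐙_ᾱ] = ½ 𝐙_ᾱ
    intro α p hp
    have hp' : p ∈ thetaU n := hp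
    simp only [thetaZtau_rep, thetaZbar_rep]
    rw [thetaApp_bracket (cTau n) (vTau n) (cZeebar n α) (vZee n α)
      cTau_diff (cZeebar_diff α) hfU hp']
    simp [thetaApp, cTau, vTau, cZeebar, vZee, Fin.sum_univ_two, Fin.sum_univ_three]
    ring
  · -- [𝐙_τ, 𝐙_τ̄] = −(𝐙_τ − 𝐙_τ̄)
    intro p hp
    have hp' : p ∈ thetaU n := hp
    simp only [thetaZtau_rep, thetaZtaubar_rep]
    rw [thetaApp_bracket (cTau n) (vTau n) (cTaubar n) (vTau n)
      cTau_diff cTaubar_diff hfU hp']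
    simp [thetaApp, cTau, cTaubar, vTau, Fin.sum_univ_two]
    ring
  · -- [𝐙_α, 𝐙_β] = 0
    intro α β p hp
    have hp' : p ∈ thetaU n := hp
    simp only [thetaZ_rep]
    rw [thetaApp_bracket (cZee n α) (vZee n α) (cZee n β) (vZee n β)
      (cZee_diff α) (cZee_diff β) hfU hp']
    rcases eq_or_ne α β with rfl | hab
    · simp [thetaApp, cZee, vZee, Fin.sum_univ_three, Pi.single_apply]
    · simp [thetaApp, cZee, vZee, Fin.sum_univ_three, Pi.single_apply, hab, hab.symm]
  · -- [𝐙_α, 𝐙_β̄] = −½ δ_{αβ} (𝐙_τ − 𝐙_τ̄)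
    intro α β p hp
    have hp' : p ∈ thetaU n := hp
    simp only [thetaZ_rep, thetaZbar_rep, thetaZtau_rep, thetaZtaubar_rep]
    rw [thetaApp_bracket (cZee n α) (vZee n α) (cZeebar n β) (vZee n β)
      (cZee_diff α) (cZeebar_diff β) hfU hp']
    rcases eq_or_ne α β with rfl | hab
    · simp [thetaApp, cZee, cZeebar, cTau, cTaubar, vZee, vTau,
        Fin.sum_univ_two, Fin.sum_univ_three, Pi.single_apply]
      linear_combination (↑p.2.2 ^ 2 * fderiv ℝ f p (0, (1 : ℝ), (0 : ℝ)) * Complex.I) *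
        Complex.I_sq
    · simp [thetaApp, cZee, cZeebar, cTau, cTaubar, vZee, vTau,
        Fin.sum_univ_two, Fin.sum_univ_three, Pi.single_apply, hab, hab.symm]
end
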